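/- arXiv:0808.0277 — 4 statements merged into one kernel-verified Lean document; each statement's English description precedes it below -/
import Mathlib

section
/- Let G and H be groups, let φ, ψ : G → H be homomorphisms, and let u, v ∈ H. Let Ĝ = G ∗ ⟨z⟩ and Ĥ = H ∗ ⟨z⟩ be the free products of G and H with an infinite cyclic group generated by z. Let φ̂_u : Ĝ → Ĥ be the homomorphism extending φ with φ̂_u(z) = u z u⁻¹, let ψ̂ : Ĝ → Ĥ be the homomorphism extending ψ with ψ̂(z) = z, and let φ̂_u^v : Ĝ → Ĥ be given by φ̂_u^v(x) = v⁻¹ φ̂_u(x) v. Then v = φ(g₀) u ψ(g₀)⁻¹ for some g₀ ∈ G (i.e., u and v are in the same doubly-twisted conjugacy class) if and only if there exists g ∈ G with g z g⁻¹ ∈ Eq(φ̂_u^v, ψ̂). -/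
/-!
In a free product `G ∗ K` a nontrivial element of `G` cannot commute with a nontrivial `k ∈ K`:
map `G ∗ K` to the regular wreath product `G ≀ K`, sending `G` to functions supported at the
coordinate `1` and `K` to translations; `k` moves that coordinate. Hence `a ↦ a z a⁻¹` is
injective on `H`. As `φ̂ᵤᵛ(g z g⁻¹) = (v⁻¹ φ(g) u) z (v⁻¹ φ(g) u)⁻¹` and
`ψ̂(g z g⁻¹) = ψ(g) z ψ(g)⁻¹`, the element `g z g⁻¹` lies in `Eq(φ̂ᵤᵛ, ψ̂)` exactly when
`v⁻¹ φ(g) u = ψ(g)`, i.e. `v = φ(g) u ψ(g)⁻¹`.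
-/

/-- The generator `z` of the infinite cyclic free factor of `G ∗ ⟨z⟩`, where the free
product with an infinite cyclic group is realized as `Monoid.Coprod G (FreeGroup Unit)`. -/
def zEl (G : Type*) [Group G] : Monoid.Coprod G (FreeGroup Unit) :=
  Monoid.Coprod.inr (FreeGroup.of ())

/-- The extension `φ̂ᵤ : G ∗ ⟨z⟩ → H ∗ ⟨z⟩` of `φ : G → H` with `φ̂ᵤ(z) = u z u⁻¹`. -/
def hatPhi {G H : Type*} [Group G] [Group H] (φ : G →* H) (u : H) :
    Monoid.Coprod G (FreeGroup Unit) →* Monoid.Coprod H (FreeGroup Unit) :=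
  Monoid.Coprod.lift (Monoid.Coprod.inl.comp φ)
    (FreeGroup.lift fun _ => Monoid.Coprod.inl u * zEl H * (Monoid.Coprod.inl u)⁻¹)

/-- The extension `ψ̂ : G ∗ ⟨z⟩ → H ∗ ⟨z⟩` of `ψ : G → H` with `ψ̂(z) = z`. -/
def hatPsi {G H : Type*} [Group G] [Group H] (ψ : G →* H) :
    Monoid.Coprod G (FreeGroup Unit) →* Monoid.Coprod H (FreeGroup Unit) :=
  Monoid.Coprod.lift (Monoid.Coprod.inl.comp ψ) Monoid.Coprod.inr

/-- `φ^v : x ↦ v⁻¹ φ(x) v`. -/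
def conjHom {G H : Type*} [Group G] [Group H] (φ : G →* H) (v : H) : G →* H :=
  ((MulAut.conj v⁻¹).toMonoidHom).comp φ

/-- The equalizer subgroup `Eq(φ, ψ) = {g : φ g = ψ g}`. -/
def eqSubgroup {G H : Type*} [Group G] [Group H] (φ ψ : G →* H) : Subgroup G where
  carrier := {g | φ g = ψ g}
  one_mem' := by simp
  mul_mem' := by
    intro a b ha hb
    simp only [Set.mem_setOf_eq] at *
    rw [_root_.map_mul, _root_.map_mul, ha, hb]
  inv_mem' := by
    intro a ha
    simp only [Set.mem_setOf_eq] at *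
    rw [_root_.map_inv, _root_.map_inv, ha]

open Monoid.Coprod

namespace RegularWreathProduct

variable {D Q : Type*} [Group D] [Group Q]

def single [DecidableEq Q] : D →* D ≀ᵣ Q where
  toFun d := ⟨Pi.mulSingle 1 d, 1⟩
  map_one' := by ext <;> simp
  map_mul' a b := by ext x <;> simp [Pi.mulSingle_mul]

@[simp]
theorem left_single [DecidableEq Q] (d : D) : (single d : D ≀ᵣ Q).left = Pi.mulSingle 1 d := rfl

end RegularWreathProduct

namespace Monoid.Coprod

variable {G K : Type*} [Group G] [Group K]

theorem eq_one_of_commute_inl_inr {g : G} {k : K} (hk : k ≠ 1) (h : Commute (inl g) (inr k)) :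
    g = 1 := by
  classical
  have hg := congrArg
    (fun x => (lift RegularWreathProduct.single RegularWreathProduct.inl x).left k) h.eq
  simpa [Pi.mulSingle_apply, hk, eq_comm] using hg

theorem inl_conj_inr_injective {k : K} (hk : k ≠ 1) :
    Function.Injective fun g : G => inl g * inr k * (inl g)⁻¹ := by
  intro a c (h : inl a * inr k * (inl a)⁻¹ = inl c * inr k * (inl c)⁻¹)
  have hca : Commute (inl (c⁻¹ * a)) (inr k) := by
    simp only [Commute, SemiconjBy, map_mul, map_inv]
    calc (inl c)⁻¹ * inl a * inr k = (inl c)⁻¹ * (inl a * inr k * (inl a)⁻¹) * inl a := by group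
      _ = (inl c)⁻¹ * (inl c * inr k * (inl c)⁻¹) * inl a := by rw [h]
      _ = inr k * ((inl c)⁻¹ * inl a) := by group
  exact (inv_mul_eq_one.mp (eq_one_of_commute_inl_inr hk hca)).symm

end Monoid.Coprod

theorem inl_conj_zEl_injective (H : Type*) [Group H] :
    Function.Injective fun a : H => inl a * zEl H * (inl a)⁻¹ :=
  inl_conj_inr_injective (FreeGroup.of_ne_one ())

section Extensions

variable {G H : Type*} [Group G] [Group H]

@[simp]
theorem hatPhi_inl (φ : G →* H) (u : H) (g : G) : hatPhi φ u (inl g) = inl (φ g) := by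
  simp [hatPhi]

@[simp]
theorem hatPhi_zEl (φ : G →* H) (u : H) : hatPhi φ u (zEl G) = inl u * zEl H * (inl u)⁻¹ := by
  simp [hatPhi, zEl]

@[simp]
theorem hatPsi_inl (ψ : G →* H) (g : G) : hatPsi ψ (inl g) = inl (ψ g) := by
  simp [hatPsi]

@[simp]
theorem hatPsi_zEl (ψ : G →* H) : hatPsi ψ (zEl G) = zEl H := by
  simp [hatPsi, zEl]

@[simp]
theorem conjHom_apply (φ : G →* H) (v : H) (g : G) : conjHom φ v g = v⁻¹ * φ g * v := by
  simp [conjHom]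

theorem mem_eqSubgroup_iff {φ ψ : G →* H} {g : G} : g ∈ eqSubgroup φ ψ ↔ φ g = ψ g := Iff.rfl

theorem inl_conj_zEl_mem_eqSubgroup_iff (φ ψ : G →* H) (u v : H) (g : G) :
    inl g * zEl G * (inl g)⁻¹ ∈ eqSubgroup (conjHom (hatPhi φ u) (inl v)) (hatPsi ψ) ↔
      v = φ g * u * (ψ g)⁻¹ := by
  have hφ : conjHom (hatPhi φ u) (inl v) (inl g * zEl G * (inl g)⁻¹) =
      inl (v⁻¹ * φ g * u) * zEl H * (inl (v⁻¹ * φ g * u))⁻¹ := by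
    simp only [conjHom_apply, map_mul, map_inv, hatPhi_inl, hatPhi_zEl]
    group
  have hψ : hatPsi ψ (inl g * zEl G * (inl g)⁻¹) = inl (ψ g) * zEl H * (inl (ψ g))⁻¹ := by
    simp only [map_mul, map_inv, hatPsi_inl, hatPsi_zEl]
  rw [mem_eqSubgroup_iff, hφ, hψ, (inl_conj_zEl_injective H).eq_iff, mul_assoc,
    inv_mul_eq_iff_eq_mul, eq_mul_inv_iff_mul_eq, eq_comm]

end Extensions

/-- `[v] = [u]` (doubly-twisted conjugacy for `(φ, ψ)`) iff there is
`g ∈ G` with `g z g⁻¹ ∈ Eq(φ̂ᵤᵛ, ψ̂)`, where `φ̂ᵤᵛ(x) = v⁻¹ φ̂ᵤ(x) v`. -/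
theorem same_class_iff_conjugate_z_in_equalizer {G H : Type*} [Group G] [Group H]
    (φ ψ : G →* H) (u v : H) :
    (∃ g₀ : G, v = φ g₀ * u * (ψ g₀)⁻¹) ↔
    ∃ g : G, Monoid.Coprod.inl g * zEl G * (Monoid.Coprod.inl g)⁻¹ ∈
      eqSubgroup (conjHom (hatPhi φ u) (Monoid.Coprod.inl v)) (hatPsi ψ) :=
  exists_congr fun g => (inl_conj_zEl_mem_eqSubgroup_iff φ ψ u v g).symm
end

section
/- Let G be a free group with basis g₁, …, g_n, let H be a free group, and let φ, ψ : G → H be homomorphisms. If the homomorphism φ ∗ ψ : G ∗ G → H has remnant, then φ(G) ∩ ψ(G) = {1}. -/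
/-! Basic definitions: cancellation in products of reduced words, remnant
of a homomorphism of free groups, and assorted constructions. -/

open FreeGroup

/-- `bpow w e` is `w` if `e = true` (exponent `+1`) and `w⁻¹` if `e = false`
(exponent `-1`). -/
def bpow {β : Type*} (w : FreeGroup β) (e : Bool) : FreeGroup β := if e then w else w⁻¹

/-- The number of letters cancelled between `a` and `b` when the product `a * b`
is brought to reduced form: `(|a| + |b| - |a * b|) / 2`. -/
def cancel {β : Type*} [DecidableEq β] (a b : FreeGroup β) : ℕ :=
  (FreeGroup.norm a + FreeGroup.norm b - FreeGroup.norm (a * b)) / 2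

/-- The maximal number of letters of the reduced word `η(gᵢ)` cancelled on its left
in a product `η(gⱼ)^ε * η(gᵢ)`, over all `j` and `ε = ±1` except `j = i, ε = -1`. -/
def maxLeftCancel {α β : Type*} [Fintype α] [DecidableEq α] [DecidableEq β]
    (η : FreeGroup α →* FreeGroup β) (i : α) : ℕ :=
  (Finset.univ.filter fun je : α × Bool => je ≠ (i, false)).sup
    fun je => cancel (bpow (η (FreeGroup.of je.1)) je.2) (η (FreeGroup.of i))

/-- The maximal number of letters of the reduced word `η(gᵢ)` cancelled on its right
in a product `η(gᵢ) * η(gⱼ)^ε`, over all `j` and `ε = ±1` except `j = i, ε = -1`. -/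
def maxRightCancel {α β : Type*} [Fintype α] [DecidableEq α] [DecidableEq β]
    (η : FreeGroup α →* FreeGroup β) (i : α) : ℕ :=
  (Finset.univ.filter fun je : α × Bool => je ≠ (i, false)).sup
    fun je => cancel (η (FreeGroup.of i)) (bpow (η (FreeGroup.of je.1)) je.2)

/-- `η` has remnant: for each generator `gᵢ`, the maximal left cancellation plus the
maximal right cancellation is strictly less than the length of `η(gᵢ)`, so a nonempty
middle subword (the remnant `Rem_η(gᵢ)`) always survives. -/
def HasRemnant {α β : Type*} [Fintype α] [DecidableEq α] [DecidableEq β]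
    (η : FreeGroup α →* FreeGroup β) : Prop :=
  ∀ i : α, maxLeftCancel η i + maxRightCancel η i < FreeGroup.norm (η (FreeGroup.of i))

/-- The length `|Rem_η(gᵢ)|` of the remnant word of `gᵢ`: the part of `η(gᵢ)` surviving
all maximal cancellations. -/
def remnantLength {α β : Type*} [Fintype α] [DecidableEq α] [DecidableEq β]
    (η : FreeGroup α →* FreeGroup β) (i : α) : ℕ :=
  FreeGroup.norm (η (FreeGroup.of i)) - maxLeftCancel η i - maxRightCancel η i

/-- The remnant `Rem_η(gᵢ)` occupies positions `[maxLeftCancel η i, |η(gᵢ)| - maxRightCancel η i)`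
of the reduced word `η(gᵢ)`.  It does not fully cancel in the reduced form of the product
`η(gᵢ) * w` iff the number of letters cancelled from the right end of `η(gᵢ)`, namely
`cancel (η(gᵢ)) w`, leaves some remnant letter alive. -/
def remnantSurvivesRightMul {α β : Type*} [Fintype α] [DecidableEq α] [DecidableEq β]
    (η : FreeGroup α →* FreeGroup β) (i : α) (w : FreeGroup β) : Prop :=
  cancel (η (FreeGroup.of i)) w + maxLeftCancel η i < FreeGroup.norm (η (FreeGroup.of i))

/-- The remnant `Rem_η(gᵢ)` does not fully cancel in the reduced form of the
product `w * η(gᵢ)`. -/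
def remnantSurvivesLeftMul {α β : Type*} [Fintype α] [DecidableEq α] [DecidableEq β]
    (η : FreeGroup α →* FreeGroup β) (i : α) (w : FreeGroup β) : Prop :=
  cancel w (η (FreeGroup.of i)) + maxRightCancel η i < FreeGroup.norm (η (FreeGroup.of i))

/-- The homomorphism `φ ∗ ψ : G ∗ G → H` on the free product `G ∗ G`, realized as the
free group on `α ⊕ α`, sending the generators of the first factor via `φ` and those of
the second factor via `ψ`. -/
def prodHom {α β : Type*} (φ ψ : FreeGroup α →* FreeGroup β) :
    FreeGroup (α ⊕ α) →* FreeGroup β :=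
  FreeGroup.lift (Sum.elim (fun i => φ (FreeGroup.of i)) (fun i => ψ (FreeGroup.of i)))

/-! A homomorphism with remnant is injective. In the image of a nonempty reduced word the
remnant of every letter survives: cancellation between the images of two adjacent letters never
exceeds the maximal cancellations that bound the remnants, and, inductively, cancellation against
a product of letter images is decided by its first factor alone. Hence that image has positive
length. Applied to `φ ∗ ψ`, an equality `φ a = ψ b` lifts to `a = b` in `G ∗ G` with the two
copies of the basis kept apart, which forces `a = 1`. -/

namespace FreeGroup

variable {β : Type*} [DecidableEq β]

theorem exists_reduce_append_eq {L₁ L₂ : List (β × Bool)} (h₁ : FreeGroup.IsReduced L₁)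
    (h₂ : FreeGroup.IsReduced L₂) :
    ∃ P X S, L₁ = P ++ X ∧ L₂ = invRev X ++ S ∧ reduce (L₁ ++ L₂) = P ++ S := by
  induction L₁ using List.reverseRecOn generalizing L₂ with
  | nil => exact ⟨[], [], L₂, rfl, rfl, by simpa using h₂.reduce_eq⟩
  | append_singleton L₁ t ih =>
    cases L₂ with
    | nil => exact ⟨L₁ ++ [t], [], [], by simp, rfl, by simpa using h₁.reduce_eq⟩
    | cons s L₂ =>
      by_cases hst : s = (t.1, !t.2)
      · obtain ⟨P, X, S, rfl, rfl, hred⟩ :=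
          ih (L₂ := L₂) (h₁.infix ⟨[], [t], rfl⟩) (h₂.infix ⟨[s], [], by simp⟩)
        refine ⟨P, X ++ [t], S, by simp, by simp [invRev, hst], ?_⟩
        rw [← hred]
        apply reduce.Step.eq
        simpa [hst] using
          Red.Step.not (L₁ := P ++ X) (L₂ := invRev X ++ S) (x := t.1) (b := t.2)
      · refine ⟨L₁ ++ [t], [], s :: L₂, by simp, rfl,
          (IsReduced.reduce_eq ?_).trans (by simp)⟩
        refine List.IsChain.append h₁ h₂ fun x hx y hy => ?_
        simp only [List.getLast?_concat, Option.mem_def, Option.some.injEq,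
          List.head?_cons] at hx hy
        subst hx hy
        obtain ⟨s₁, s₂⟩ := s
        rintro rfl
        cases s₂ <;> simp_all

theorem exists_toWord_mul_eq (a b : FreeGroup β) :
    ∃ P X S, a.toWord = P ++ X ∧ b.toWord = invRev X ++ S ∧ (a * b).toWord = P ++ S := by
  rw [toWord_mul]
  exact exists_reduce_append_eq isReduced_toWord isReduced_toWord

end FreeGroup

section Cancel

variable {β : Type*} [DecidableEq β]

theorem cancel_eq_length {a b : FreeGroup β} {P X S : List (β × Bool)}
    (ha : a.toWord = P ++ X) (hb : b.toWord = FreeGroup.invRev X ++ S)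
    (hab : (a * b).toWord = P ++ S) : cancel a b = X.length := by
  simp only [cancel, FreeGroup.norm, ha, hb, hab, List.length_append, FreeGroup.invRev_length]
  omega

theorem norm_mul_add_two_mul_cancel (a b : FreeGroup β) :
    FreeGroup.norm (a * b) + 2 * cancel a b = FreeGroup.norm a + FreeGroup.norm b := by
  obtain ⟨P, X, S, ha, hb, hab⟩ := FreeGroup.exists_toWord_mul_eq a b
  simp only [cancel_eq_length ha hb hab, FreeGroup.norm, ha, hb, hab, List.length_append,
    FreeGroup.invRev_length]
  omega

theorem cancel_inv_inv (a b : FreeGroup β) : cancel b⁻¹ a⁻¹ = cancel a b := by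
  simp only [cancel, ← mul_inv_rev, FreeGroup.norm_inv_eq, Nat.add_comm (FreeGroup.norm b)]

theorem cancel_mul_eq_of_add_lt_norm {a b c : FreeGroup β}
    (h : cancel a b + cancel b c < FreeGroup.norm b) : cancel a (b * c) = cancel a b := by
  obtain ⟨P, X, S, ha, hb, hab⟩ := FreeGroup.exists_toWord_mul_eq a b
  obtain ⟨P', Y, S', hb', hc, hbc⟩ := FreeGroup.exists_toWord_mul_eq b c
  rw [cancel_eq_length ha hb hab] at h ⊢
  rw [cancel_eq_length hb' hc hbc] at h
  have hlen := congrArg List.length (hb.symm.trans hb')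
  simp only [FreeGroup.norm, hb, List.length_append, FreeGroup.invRev_length] at h hlen
  -- `b = X⁻¹ M Y` with a nonempty middle `M`, since the two cancellations do not overlap
  obtain ⟨M, rfl, rfl⟩ : ∃ M, P' = FreeGroup.invRev X ++ M ∧ S = M ++ Y := by
    rcases List.append_eq_append_iff.mp (hb.symm.trans hb') with
      ⟨M, h₁, h₂⟩ | ⟨M, h₁, h₂⟩
    · exact ⟨M, h₁, h₂⟩
    · have := congrArg List.length h₁
      have := congrArg List.length h₂
      simp only [List.length_append, FreeGroup.invRev_length] at *
      omega
  have hM : M ≠ [] := by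
    rintro rfl
    simp at h
  have hred : FreeGroup.IsReduced (P ++ M ++ S') := by
    refine FreeGroup.IsReduced.append_overlap ?_ ?_ hM
    · exact (hab ▸ FreeGroup.isReduced_toWord).infix ⟨[], Y, by simp⟩
    · exact (hbc ▸ FreeGroup.isReduced_toWord).infix ⟨FreeGroup.invRev X, [], by simp⟩
  have habc : (a * (b * c)).toWord = P ++ M ++ S' := by
    rw [← FreeGroup.mk_toWord (x := a), ← FreeGroup.mk_toWord (x := b * c), ha, hbc,
      ← hred.reduce_eq, ← FreeGroup.toWord_mk]
    simp only [← FreeGroup.mul_mk, ← FreeGroup.inv_mk, mul_assoc, mul_inv_cancel_left,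
      List.append_assoc]
  have hnorm := norm_mul_add_two_mul_cancel a (b * c)
  simp only [FreeGroup.norm, habc, ha, hbc, List.length_append, FreeGroup.invRev_length] at hnorm
  omega

section Chain

variable {ι : Type*} {W : ι → FreeGroup β} {L R : ι → ℕ} {Adj : ι → ι → Prop}

theorem lt_norm_prod_and_cancel_prod_eq_of_isChain
    (hW : ∀ i, L i + R i < FreeGroup.norm (W i))
    (hAdj : ∀ i j, Adj i j → cancel (W i) (W j) ≤ R i ∧ cancel (W i) (W j) ≤ L j)
    (i : ι) (l : List ι) (hl : (i :: l).IsChain Adj) :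
    L i < FreeGroup.norm ((i :: l).map W).prod ∧
      ∀ u, cancel u (W i) ≤ L i → cancel u ((i :: l).map W).prod = cancel u (W i) := by
  induction l generalizing i with
  | nil => exact ⟨by simpa using (Nat.le_add_right _ _).trans_lt (hW i), fun u _ => by simp⟩
  | cons j l ih =>
    obtain ⟨hij, hl⟩ := List.isChain_cons_cons.mp hl
    obtain ⟨hnorm, hcancel⟩ := ih j hl
    rw [show ((i :: j :: l).map W).prod = W i * ((j :: l).map W).prod from List.prod_cons]
    generalize ((j :: l).map W).prod = M at *
    obtain ⟨hR, hL⟩ := hAdj i j hij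
    have hWM : cancel (W i) M = cancel (W i) (W j) := hcancel _ hL
    have hWi := hW i
    have hnormM := norm_mul_add_two_mul_cancel (W i) M
    exact ⟨by omega, fun u hu => cancel_mul_eq_of_add_lt_norm (by omega)⟩

theorem prod_map_ne_one_of_isChain
    (hW : ∀ i, L i + R i < FreeGroup.norm (W i))
    (hAdj : ∀ i j, Adj i j → cancel (W i) (W j) ≤ R i ∧ cancel (W i) (W j) ≤ L j)
    {l : List ι} (hl : l.IsChain Adj) (hne : l ≠ []) : (l.map W).prod ≠ 1 := by
  obtain ⟨i, l, rfl⟩ := List.exists_cons_of_ne_nil hne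
  intro h1
  have := (lt_norm_prod_and_cancel_prod_eq_of_isChain hW hAdj i l hl).1
  rw [h1, FreeGroup.norm_one] at this
  exact Nat.not_lt_zero _ this

end Chain

end Cancel

section LetterImage

variable {α β : Type*} (η : FreeGroup α →* FreeGroup β)

def letterImage (l : α × Bool) : FreeGroup β := bpow (η (of l.1)) l.2

theorem letterImage_flip (l : α × Bool) :
    letterImage η (l.1, !l.2) = (letterImage η l)⁻¹ := by
  obtain ⟨i, _ | _⟩ := l <;> simp [letterImage, bpow]

theorem map_mk_eq_prod_map_letterImage (L : List (α × Bool)) :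
    η (mk L) = (L.map (letterImage η)).prod := by
  rw [lift_unique η (f := η ∘ of) fun _ => rfl, lift_mk]
  congr 1
  refine List.map_congr_left fun ⟨i, e⟩ _ => ?_
  cases e <;> rfl

end LetterImage

section Remnant

variable {α β : Type*} [Fintype α] [DecidableEq α] [DecidableEq β]
  (η : FreeGroup α →* FreeGroup β)

theorem cancel_le_maxLeftCancel {i j : α} {e : Bool} (h : (j, e) ≠ (i, false)) :
    cancel (bpow (η (of j)) e) (η (of i)) ≤ maxLeftCancel η i :=
  Finset.le_sup (f := fun je : α × Bool => cancel (bpow (η (of je.1)) je.2) (η (of i)))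
    (b := (j, e)) (Finset.mem_filter.mpr ⟨Finset.mem_univ _, h⟩)

theorem cancel_le_maxRightCancel {i j : α} {e : Bool} (h : (j, e) ≠ (i, false)) :
    cancel (η (of i)) (bpow (η (of j)) e) ≤ maxRightCancel η i :=
  Finset.le_sup (f := fun je : α × Bool => cancel (η (of i)) (bpow (η (of je.1)) je.2))
    (b := (j, e)) (Finset.mem_filter.mpr ⟨Finset.mem_univ _, h⟩)

-- Reading `η(gᵢ)⁻¹` from the left is reading `η(gᵢ)` from the right, hence the swap.
def leftCancelBound (l : α × Bool) : ℕ :=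
  bif l.2 then maxLeftCancel η l.1 else maxRightCancel η l.1

def rightCancelBound (l : α × Bool) : ℕ :=
  bif l.2 then maxRightCancel η l.1 else maxLeftCancel η l.1

theorem rightCancelBound_flip (l : α × Bool) :
    rightCancelBound η (l.1, !l.2) = leftCancelBound η l := by
  obtain ⟨i, _ | _⟩ := l <;> rfl

theorem HasRemnant.leftCancelBound_add_rightCancelBound_lt {η : FreeGroup α →* FreeGroup β}
    (h : HasRemnant η) (l : α × Bool) :
    leftCancelBound η l + rightCancelBound η l < FreeGroup.norm (letterImage η l) := by
  obtain ⟨i, e⟩ := l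
  have := h i
  cases e <;> simp [leftCancelBound, rightCancelBound, letterImage, bpow] <;> omega

theorem cancel_letterImage_le_rightCancelBound {x y : α × Bool} (h : x.1 = y.1 → x.2 = y.2) :
    cancel (letterImage η x) (letterImage η y) ≤ rightCancelBound η x := by
  obtain ⟨i, _ | _⟩ := x <;> obtain ⟨j, f⟩ := y
  · have : cancel (letterImage η (i, false)) (letterImage η (j, f)) =
        cancel (letterImage η (j, !f)) (η (of i)) := by
      rw [← cancel_inv_inv, ← letterImage_flip]
      simp [letterImage, bpow]
    exact this ▸ cancel_le_maxLeftCancel η (by simp_all)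
  · exact cancel_le_maxRightCancel η (by simp_all)

theorem cancel_letterImage_le_leftCancelBound {x y : α × Bool} (h : x.1 = y.1 → x.2 = y.2) :
    cancel (letterImage η x) (letterImage η y) ≤ leftCancelBound η y := by
  rw [← cancel_inv_inv, ← letterImage_flip, ← letterImage_flip, ← rightCancelBound_flip]
  exact cancel_letterImage_le_rightCancelBound η (by simp_all)

theorem HasRemnant.injective {η : FreeGroup α →* FreeGroup β} (h : HasRemnant η) :
    Function.Injective η := by
  refine (injective_iff_map_eq_one η).mpr fun w hw => ?_
  by_contra hne
  rw [← mk_toWord (x := w), map_mk_eq_prod_map_letterImage] at hw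
  refine prod_map_ne_one_of_isChain h.leftCancelBound_add_rightCancelBound_lt
    (fun x y hxy => ⟨cancel_letterImage_le_rightCancelBound η hxy,
      cancel_letterImage_le_leftCancelBound η hxy⟩) isReduced_toWord ?_ hw
  rwa [Ne, toWord_eq_nil_iff]

end Remnant

theorem FreeGroup.eq_one_of_map_inl_eq_map_inr {α γ : Type*} {a : FreeGroup α} {b : FreeGroup γ}
    (h : map Sum.inl a = map Sum.inr b) : a = 1 := by
  let π : FreeGroup (α ⊕ γ) →* FreeGroup α := lift (Sum.elim of 1)
  have hl : π.comp (map Sum.inl) = MonoidHom.id _ := ext_hom _ _ fun _ => by simp [π]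
  have hr : π.comp (map Sum.inr) = 1 := ext_hom _ _ fun _ => by simp [π]
  calc a = π.comp (map Sum.inl) a := by rw [hl]; rfl
    _ = π.comp (map Sum.inr) b := congrArg π h
    _ = 1 := by rw [hr]; rfl

theorem prodHom_map_inl {α β : Type*} (φ ψ : FreeGroup α →* FreeGroup β)
    (a : FreeGroup α) :
    prodHom φ ψ (map Sum.inl a) = φ a :=
  DFunLike.congr_fun
    (ext_hom _ _ fun _ => by simp [prodHom] : (prodHom φ ψ).comp (map Sum.inl) = φ) a

theorem prodHom_map_inr {α β : Type*} (φ ψ : FreeGroup α →* FreeGroup β)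
    (b : FreeGroup α) :
    prodHom φ ψ (map Sum.inr b) = ψ b :=
  DFunLike.congr_fun
    (ext_hom _ _ fun _ => by simp [prodHom] : (prodHom φ ψ).comp (map Sum.inr) = ψ) b

/-- If `φ ∗ ψ : G ∗ G → H` has remnant, then `φ(G) ∩ ψ(G) = {1}`. -/
theorem range_inter_range_eq_bot_of_hasRemnant {n : ℕ} {β : Type*} [DecidableEq β]
    (φ ψ : FreeGroup (Fin n) →* FreeGroup β)
    (h : HasRemnant (prodHom φ ψ)) :
    φ.range ⊓ ψ.range = ⊥ := by
  rw [Subgroup.eq_bot_iff_forall]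
  rintro _ ⟨⟨a, rfl⟩, ⟨b, hab⟩⟩
  have : map Sum.inl a = map Sum.inr b :=
    h.injective (by rw [prodHom_map_inl, prodHom_map_inr, hab])
  rw [FreeGroup.eq_one_of_map_inl_eq_map_inr this, _root_.map_one]
end

section
/- Let G be a free group with basis g₁, …, g_n with n > 1. For every ε > 0 there exists M > 0 such that for every m ≥ M, among all endomorphisms φ : G → G determined by n-tuples (φ(g₁), …, φ(g_n)) of elements of G of reduced word length at most m, the proportion of those φ which have remnant is greater than 1 − ε. -/
/-! Basic definitions: cancellation in products of reduced words, remnant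
of a homomorphism of free groups, and assorted constructions. -/

open FreeGroup

/-!
A tuple `t` fails to have remnant only if, for some `i ≠ j` and sign `e`, at least half of the
reduced word `t i` cancels against `(t j)^e` on one side: self-cancellation in `t i * t i` never
reaches half of `t i`, free groups being torsion-free. For a fixed word `u`, a word `b` of length
at most `m` losing at least half of itself against `u` is determined by the number of cancelled
letters and its surviving half, so there are at most `(m + 1) (2n + 1)^(m/2)` such `b`, whereas
the ball of radius `m` has at least `(2n - 1)^m` elements. As `2n + 1 < (2n - 1)^2` for `n ≥ 2`,
the proportion of tuples without remnant tends to `0`.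
-/

open Finset Fintype Filter Topology

theorem List.eq_of_length_le_of_getElem?_eq {β : Type*} {k : ℕ} {l₁ l₂ : List β}
    (h₁ : l₁.length ≤ k) (h₂ : l₂.length ≤ k) (h : ∀ i : Fin k, l₁[(i : ℕ)]? = l₂[(i : ℕ)]?) :
    l₁ = l₂ := by
  refine List.ext_getElem? fun i => ?_
  by_cases hi : i < k
  · exact h ⟨i, hi⟩
  · rw [List.getElem?_eq_none (by omega), List.getElem?_eq_none (by omega)]

namespace FreeGroup

variable {α : Type*} [DecidableEq α]

theorem IsReduced.eq_nil_of_invRev_eq {L : List (α × Bool)} (h : IsReduced L)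
    (hL : invRev L = L) : L = [] := by
  have hinv : (mk L)⁻¹ = mk L := by rw [inv_mk, hL]
  have hsq : mk L ^ 2 = 1 := by rw [sq]; nth_rw 1 [← hinv]; exact inv_mul_cancel _
  have h1 : mk L = 1 := by simpa using pow_eq_one_iff.1 hsq
  rw [← h.reduce_eq, ← toWord_mk, h1, toWord_one]

theorem IsReduced.eq_nil_of_invRev_append_self {L : List (α × Bool)}
    (h : IsReduced (invRev L ++ L)) : invRev L ++ L = [] := by
  rw [← h.reduce_eq, reduce_invRev_left_cancel]

theorem IsReduced.exists_reduce_append_eq {v u : List (α × Bool)} (hu : IsReduced u)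
    (hv : IsReduced v) :
    ∃ w u' v', u = u' ++ w ∧ v = invRev w ++ v' ∧ reduce (u ++ v) = u' ++ v' := by
  induction v generalizing u with
  | nil => exact ⟨[], u, [], by simp, by simp [invRev], by simpa using hu.reduce_eq⟩
  | cons y v ih =>
    rcases u.eq_nil_or_concat' with rfl | ⟨u, x, rfl⟩
    · exact ⟨[], [], y :: v, by simp, by simp [invRev], by simpa using hv.reduce_eq⟩
    by_cases hxy : y = (x.1, !x.2)
    · obtain ⟨w, u', v', rfl, rfl, hred⟩ := ih (hu.infix (List.prefix_append _ _).isInfix) hv.tail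
      refine ⟨w ++ [x], u', v', by simp, by simp [invRev, hxy], ?_⟩
      have hstep : Red.Step (u' ++ w ++ [x] ++ y :: (invRev w ++ v'))
          (u' ++ w ++ (invRev w ++ v')) := by
        rw [hxy, List.append_assoc]; exact Red.Step.not
      rw [reduce.Step.eq hstep, hred]
    · refine ⟨[], u ++ [x], y :: v, by simp, by simp [invRev], IsReduced.reduce_eq ?_⟩
      refine List.isChain_append.2 ⟨hu, hv, fun a ha b hb => ?_⟩
      simp only [List.getLast?_append, List.getLast?_singleton, Option.some_or,
        Option.mem_def, Option.some.injEq, List.head?_cons] at ha hb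
      subst ha hb
      intro h1
      by_contra h2
      exact hxy (Prod.ext h1.symm (Bool.eq_not_of_ne (Ne.symm h2)))

theorem exists_toWord_mul_eq_append (a b : FreeGroup α) :
    ∃ w u v, a.toWord = u ++ w ∧ b.toWord = invRev w ++ v ∧ (a * b).toWord = u ++ v ∧
      cancel a b = w.length := by
  obtain ⟨w, u, v, ha, hb, hab⟩ :=
    IsReduced.exists_reduce_append_eq (u := a.toWord) isReduced_toWord isReduced_toWord
  rw [← toWord_mul] at hab
  refine ⟨w, u, v, ha, hb, hab, ?_⟩
  simp only [cancel, norm, ha, hb, hab, List.length_append, invRev_length]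
  omega

theorem cancel_le_norm_left (a b : FreeGroup α) : cancel a b ≤ a.norm := by
  obtain ⟨w, u, v, ha, -, -, hc⟩ := exists_toWord_mul_eq_append a b
  simp [norm, ha, hc]

theorem cancel_le_norm_right (a b : FreeGroup α) : cancel a b ≤ b.norm := by
  obtain ⟨w, u, v, -, hb, -, hc⟩ := exists_toWord_mul_eq_append a b
  simp [norm, hb, hc]

theorem toWord_take_cancel (a b : FreeGroup α) :
    b.toWord.take (cancel a b) = invRev (a.toWord.drop (a.norm - cancel a b)) := by
  obtain ⟨w, u, v, ha, hb, -, hc⟩ := exists_toWord_mul_eq_append a b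
  have hdrop : a.toWord.drop (a.norm - cancel a b) = w := by
    simp [norm, ha, hc, List.drop_left']
  rw [hdrop, hb, hc, ← invRev_length, List.take_left]

theorem cancel_inv_inv (a b : FreeGroup α) : cancel b⁻¹ a⁻¹ = cancel a b := by
  simp only [cancel, ← mul_inv_rev, norm_inv_eq, add_comm]

/-- If half of `b` cancelled in `b * b`, the overlap `O` of the two cancelled segments of the
reduced word of `b` would satisfy `invRev O = O`, which torsion-freeness forbids unless `O = []`. -/
theorem two_mul_cancel_self_lt_norm {b : FreeGroup α} (hb : b ≠ 1) :
    2 * cancel b b < b.norm := by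
  obtain ⟨w, u, v, hu, hv, -, hc⟩ := exists_toWord_mul_eq_append b b
  by_contra! hle
  suffices hnil : b.toWord = [] from hb (toWord_eq_nil_iff.1 hnil)
  have hred : IsReduced b.toWord := isReduced_toWord
  rcases List.append_eq_append_iff.1 (hu.symm.trans hv) with ⟨O, hwO, rfl⟩ | ⟨c, rfl, rfl⟩
  · have hlen : (invRev v).length = u.length := by
      have := congrArg List.length (hu.symm.trans hv)
      simp only [List.length_append, invRev_length] at this ⊢
      omega
    rw [invRev_append] at hwO
    obtain ⟨hvu, hO⟩ := List.append_inj hwO hlen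
    have hO' : O = [] :=
      (hred.infix ⟨u, v, by rw [hu, List.append_assoc]⟩).eq_nil_of_invRev_eq hO
    have hb' : b.toWord = invRev v ++ v := by rw [hu, hO', hvu, List.nil_append]
    rw [hb'] at hred ⊢
    exact hred.eq_nil_of_invRev_append_self
  · have hc' : c = [] := by
      simp only [norm, hu, hc, List.length_append, invRev_length] at hle
      exact List.eq_nil_of_length_eq_zero (by omega)
    rw [hu, hc', List.append_nil] at hred ⊢
    exact hred.eq_nil_of_invRev_append_self

theorem toWord_mul_mk_singleton {g : FreeGroup α} {x : α × Bool}
    (hx : ∀ y ∈ g.toWord.getLast?, y.1 = x.1 → y.2 = x.2) :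
    (g * mk [x]).toWord = g.toWord ++ [x] := by
  rw [toWord_mul, toWord_mk, reduce_singleton]
  refine IsReduced.reduce_eq (List.isChain_append.2 ⟨isReduced_toWord, IsReduced.singleton, ?_⟩)
  simpa using hx

variable [Fintype α]

theorem finite_setOf_norm_le (m : ℕ) : {g : FreeGroup α | g.norm ≤ m}.Finite :=
  ((List.finite_length_le _ m).image mk).subset fun g hg => ⟨g.toWord, hg, mk_toWord⟩

noncomputable def normBall (m : ℕ) : Finset (FreeGroup α) := (finite_setOf_norm_le m).toFinset

@[simp]
theorem mem_normBall {m : ℕ} {g : FreeGroup α} : g ∈ normBall m ↔ g.norm ≤ m := by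
  simp [normBall]

noncomputable def normSphere (m : ℕ) : Finset (FreeGroup α) := {g ∈ normBall m | g.norm = m}

@[simp]
theorem mem_normSphere {m : ℕ} {g : FreeGroup α} : g ∈ normSphere m ↔ g.norm = m := by
  simp +contextual [normSphere]

def extendingLetters (g : FreeGroup α) : Finset (α × Bool) :=
  univ \ (g.toWord.getLast?.map fun y => (y.1, !y.2)).toFinset

theorem toWord_mul_mk_of_mem_extendingLetters {g : FreeGroup α} {x : α × Bool}
    (hx : x ∈ extendingLetters g) : (g * mk [x]).toWord = g.toWord ++ [x] := by
  refine toWord_mul_mk_singleton fun y hy h1 => ?_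
  have hne : x ≠ (y.1, !y.2) := fun h =>
    (mem_sdiff.1 hx).2 (by rw [Option.mem_toFinset, Option.mem_def] at *; simp [hy, h])
  by_contra h2
  exact hne (Prod.ext h1.symm (Bool.eq_not_of_ne (Ne.symm h2)))

theorem card_extendingLetters_ge (g : FreeGroup α) :
    2 * Fintype.card α - 1 ≤ #(extendingLetters g) := by
  refine le_trans ?_ (le_card_sdiff _ _)
  have : #(g.toWord.getLast?.map fun y => (y.1, !y.2)).toFinset ≤ 1 := by
    rw [Option.card_toFinset]; cases g.toWord.getLast? <;> simp
  simp only [card_univ, Fintype.card_prod, Fintype.card_bool]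
  omega

theorem mul_card_normSphere_le (m : ℕ) :
    (2 * Fintype.card α - 1) * #(normSphere (α := α) m) ≤ #(normSphere (α := α) (m + 1)) := by
  calc (2 * Fintype.card α - 1) * #(normSphere (α := α) m)
      ≤ ∑ g ∈ normSphere m, #(extendingLetters g) := by
        rw [mul_comm, ← smul_eq_mul, ← sum_const]
        exact sum_le_sum fun g _ => card_extendingLetters_ge g
    _ = #((normSphere m).sigma extendingLetters) := (card_sigma _ _).symm
    _ ≤ #(normSphere (m + 1)) := by
      refine card_le_card_of_injOn (fun p => p.1 * mk [p.2]) (fun p hp => ?_)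
        fun p hp q hq hpq => ?_
      · simp only [coe_sigma, Set.mem_sigma_iff, mem_coe, mem_normSphere] at hp
        simp [norm, toWord_mul_mk_of_mem_extendingLetters hp.2, ← hp.1]
      · simp only [coe_sigma, Set.mem_sigma_iff, mem_coe] at hp hq
        have h := congrArg toWord hpq
        simp only [toWord_mul_mk_of_mem_extendingLetters hp.2,
          toWord_mul_mk_of_mem_extendingLetters hq.2] at h
        obtain ⟨h1, h2⟩ := List.append_inj' h rfl
        exact Sigma.ext (toWord_injective h1) (heq_of_eq (List.singleton_inj.1 h2))

theorem pow_le_card_normBall (m : ℕ) : (2 * Fintype.card α - 1) ^ m ≤ #(normBall (α := α) m) := by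
  have hsphere : ∀ k, (2 * Fintype.card α - 1) ^ k ≤ #(normSphere (α := α) k) := by
    intro k
    induction k with
    | zero => simp [normSphere, norm_eq_zero, filter_eq']
    | succ k ih =>
      rw [pow_succ']
      exact (Nat.mul_le_mul_left _ ih).trans (mul_card_normSphere_le k)
  exact (hsphere m).trans (card_le_card (filter_subset _ _))

theorem card_filter_norm_le_two_mul_cancel_left (u : FreeGroup α) (m : ℕ) :
    #{b ∈ normBall m | b.norm ≤ 2 * cancel u b} ≤
      (m + 1) * (2 * Fintype.card α + 1) ^ (m / 2) := by
  let code : FreeGroup α → ℕ × (Fin (m / 2) → Option (α × Bool)) :=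
    fun b => (cancel u b, fun i => (b.toWord.drop (cancel u b))[(i : ℕ)]?)
  have hsuffix : ∀ b ∈ ({b ∈ normBall m | b.norm ≤ 2 * cancel u b} : Finset _),
      (b.toWord.drop (cancel u b)).length ≤ m / 2 := by
    intro b hb
    simp only [mem_filter, mem_normBall] at hb
    rw [List.length_drop]
    change b.norm - _ ≤ _
    omega
  calc #{b ∈ normBall m | b.norm ≤ 2 * cancel u b}
      ≤ #(range (m + 1) ×ˢ (univ : Finset (Fin (m / 2) → Option (α × Bool)))) := by
        refine card_le_card_of_injOn code (fun b hb => ?_) fun b₁ hb₁ b₂ hb₂ h => ?_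
        · simp only [mem_coe, mem_filter, mem_normBall] at hb
          have := cancel_le_norm_right u b
          simp [code]
          omega
        · simp only [code, Prod.mk.injEq] at h
          obtain ⟨hc, hd⟩ := h
          have hdrop := List.eq_of_length_le_of_getElem?_eq (hsuffix b₁ hb₁) (hsuffix b₂ hb₂)
            (fun i => by simpa [hc] using congrFun hd i)
          apply toWord_injective
          rw [← List.take_append_drop (cancel u b₁) b₁.toWord,
            ← List.take_append_drop (cancel u b₂) b₂.toWord, toWord_take_cancel,
            toWord_take_cancel, hdrop, hc]
    _ = (m + 1) * (2 * Fintype.card α + 1) ^ (m / 2) := by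
        simp [card_univ, Fintype.card_prod, Fintype.card_option, mul_comm]

theorem card_filter_norm_le_two_mul_cancel_right (u : FreeGroup α) (m : ℕ) :
    #{b ∈ normBall m | b.norm ≤ 2 * cancel b u} ≤
      (m + 1) * (2 * Fintype.card α + 1) ^ (m / 2) := by
  refine le_trans (card_le_card_of_injOn (· ⁻¹) (fun b hb => ?_) inv_injective.injOn)
    (card_filter_norm_le_two_mul_cancel_left u⁻¹ m)
  simp only [coe_filter, Set.mem_ofPred_eq, mem_normBall] at hb ⊢
  rwa [norm_inv_eq, cancel_inv_inv]

end FreeGroup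

theorem Fintype.card_filter_piFinset_le {ι X : Type*} [Fintype ι] [DecidableEq ι] [DecidableEq X]
    (s : Finset X) {i j : ι} (hji : j ≠ i) (R : X → X → Prop) [DecidableRel R] {K : ℕ}
    (hK : ∀ a, #{b ∈ s | R a b} ≤ K) :
    #{t ∈ piFinset fun _ : ι => s | R (t j) (t i)} ≤ K * #s ^ (Fintype.card ι - 1) := by
  have hcard : #(piFinset fun _ : {k // k ≠ i} => s) = #s ^ (Fintype.card ι - 1) := by
    simp [Fintype.card_subtype_compl]
  rw [← hcard]
  refine card_le_mul_card_image_of_maps_to (f := fun (t : ι → X) (k : {k // k ≠ i}) => t k)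
    (fun t ht => ?_) K fun r _ => ?_
  · simp only [mem_filter, Fintype.mem_piFinset] at ht ⊢
    exact fun k => ht.1 k
  · -- a tuple in the fiber over `r` is determined by its `i`-th entry, `R`-related to `r j`
    refine (card_le_card_of_injOn (fun t => t i) (fun t ht => ?_) fun t₁ ht₁ t₂ ht₂ h => ?_).trans
      (hK (r ⟨j, hji⟩))
    · simp only [coe_filter, Set.mem_ofPred_eq, Fintype.mem_piFinset, mem_filter] at ht ⊢
      exact ⟨ht.1.1 i, ht.2 ▸ ht.1.2⟩
    · simp only [coe_filter, Set.mem_ofPred_eq] at ht₁ ht₂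
      funext k
      by_cases hk : k = i
      · exact hk ▸ h
      · exact congrFun (ht₁.2.trans ht₂.2.symm) ⟨k, hk⟩

theorem Finset.two_mul_sup_lt {γ : Type*} {s : Finset γ} {f : γ → ℕ} {N : ℕ} (hN : 0 < N)
    (h : ∀ x ∈ s, 2 * f x < N) : 2 * s.sup f < N := by
  have := Finset.sup_le (f := f) (a := (N - 1) / 2) fun x hx => by have := h x hx; omega
  omega

section Remnant

variable {ι β : Type*} [Fintype ι] [DecidableEq ι] [DecidableEq β]

instance (η : FreeGroup ι →* FreeGroup β) : Decidable (HasRemnant η) := by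
  unfold HasRemnant; infer_instance

theorem hasRemnant_lift_of_forall_ne [Nontrivial ι] (t : ι → FreeGroup β)
    (h : ∀ i j, j ≠ i → ∀ e, 2 * cancel (bpow (t j) e) (t i) < (t i).norm ∧
      2 * cancel (t i) (bpow (t j) e) < (t i).norm) :
    HasRemnant (lift t) := by
  intro i
  obtain ⟨j, hji⟩ := exists_ne i
  have hpos : 0 < (t i).norm := by have := (h i j hji true).1; omega
  have hself : 2 * cancel (t i) (t i) < (t i).norm :=
    two_mul_cancel_self_lt_norm fun h1 => by simp [h1] at hpos
  -- the only pair `(j, e)` with `j = i` left in the suprema is `(i, +1)`, i.e. self-cancellation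
  have hpair : ∀ je ∈ (univ.filter fun je : ι × Bool => je ≠ (i, false)),
      2 * cancel (bpow (t je.1) je.2) (t i) < (t i).norm ∧
        2 * cancel (t i) (bpow (t je.1) je.2) < (t i).norm := by
    rintro ⟨k, e⟩ hke
    by_cases hk : k = i
    · subst hk
      obtain rfl : e = true := by simpa using hke
      exact ⟨hself, hself⟩
    · exact h i k hk e
  have hL := Finset.two_mul_sup_lt hpos fun je hje => by
    simpa only [lift_apply_of] using (hpair je hje).1
  have hR := Finset.two_mul_sup_lt hpos fun je hje => by
    simpa only [lift_apply_of] using (hpair je hje).2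
  simp only [maxLeftCancel, maxRightCancel, lift_apply_of] at hL hR ⊢
  omega

end Remnant

theorem tendsto_mul_pow_half_div_pow {a b : ℝ} (ha : 1 ≤ a) (hb : 0 < b) (hab : a < b ^ 2) :
    Tendsto (fun m : ℕ => (m + 1) * a ^ (m / 2) / b ^ m) atTop (𝓝 0) := by
  set r := √a / b
  have hr0 : 0 ≤ r := by positivity
  have hr1 : r < 1 := by rw [div_lt_one hb]; exact (Real.sqrt_lt' hb).2 hab
  have hlim : Tendsto (fun m : ℕ => m * r ^ m + r ^ m) atTop (𝓝 0) := by
    simpa using (tendsto_self_mul_const_pow_of_lt_one hr0 hr1).add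
      (tendsto_pow_atTop_nhds_zero_of_lt_one hr0 hr1)
  refine squeeze_zero (fun m => by positivity) (fun m => ?_) hlim
  calc (m + 1) * a ^ (m / 2) / b ^ m ≤ (m + 1) * √a ^ m / b ^ m := by
        gcongr
        calc a ^ (m / 2) = √a ^ (2 * (m / 2)) := by rw [pow_mul, Real.sq_sqrt (by linarith)]
          _ ≤ √a ^ m := pow_le_pow_right₀ (Real.one_le_sqrt.2 ha) (Nat.mul_div_le m 2)
    _ = m * r ^ m + r ^ m := by rw [div_pow]; ring

theorem one_sub_div_le_div {G B N P c D : ℝ} (hsum : G + B = N * P) (hB : B ≤ c * P)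
    (hc : 0 ≤ c) (hD : 0 < D) (hDN : D ≤ N) (hP : 0 < P) : 1 - c / D ≤ G / (N * P) := by
  rw [le_div_iff₀ (mul_pos (hD.trans_le hDN) hP)]
  have : c * P ≤ c / D * (N * P) := by
    rw [div_mul_eq_mul_div, le_div_iff₀ hD]
    nlinarith [mul_le_mul_of_nonneg_left hDN (mul_nonneg hc hP.le)]
  nlinarith

section Counting

variable {ι β : Type*} [Fintype ι] [DecidableEq ι] [DecidableEq β] [Fintype β]

theorem card_filter_not_hasRemnant_le [Nontrivial ι] (m : ℕ) :
    #{t ∈ piFinset fun _ : ι => normBall (α := β) m | ¬HasRemnant (lift t)} ≤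
      4 * Fintype.card ι ^ 2 * ((m + 1) * (2 * Fintype.card β + 1) ^ (m / 2)) *
        #(normBall (α := β) m) ^ (Fintype.card ι - 1) := by
  set K := (m + 1) * (2 * Fintype.card β + 1) ^ (m / 2)
  set T := piFinset fun _ : ι => normBall (α := β) m
  let bad : (ι × ι) × Bool → Finset (ι → FreeGroup β) := fun q =>
    {t ∈ T | (t q.1.1).norm ≤ 2 * cancel (bpow (t q.1.2) q.2) (t q.1.1)} ∪
      {t ∈ T | (t q.1.1).norm ≤ 2 * cancel (t q.1.1) (bpow (t q.1.2) q.2)}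
  let pairs : Finset ((ι × ι) × Bool) := univ.filter fun q => q.1.2 ≠ q.1.1
  have hcover : {t ∈ T | ¬HasRemnant (lift t)} ⊆ pairs.biUnion bad := by
    intro t ht
    rw [mem_filter] at ht
    by_contra hnot
    refine ht.2 (hasRemnant_lift_of_forall_ne t fun i j hji e => ?_)
    simp only [pairs, bad, mem_biUnion, mem_filter, mem_union, not_exists, not_and] at hnot
    have := hnot ((i, j), e) (by simpa using hji)
    simp only [ht.1, true_and, not_or, not_le] at this
    exact this
  have hbad : ∀ q ∈ pairs, #(bad q) ≤ 2 * (K * #(normBall (α := β) m) ^ (Fintype.card ι - 1)) := by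
    rintro ⟨⟨i, j⟩, e⟩ hq
    have hji : j ≠ i := by simpa [pairs] using hq
    refine (card_union_le _ _).trans ?_
    have hL := Fintype.card_filter_piFinset_le (normBall (α := β) m) hji
      (fun a b => b.norm ≤ 2 * cancel (bpow a e) b)
      fun a => card_filter_norm_le_two_mul_cancel_left (bpow a e) m
    have hR := Fintype.card_filter_piFinset_le (normBall (α := β) m) hji
      (fun a b => b.norm ≤ 2 * cancel b (bpow a e))
      fun a => card_filter_norm_le_two_mul_cancel_right (bpow a e) m
    rw [two_mul]
    exact add_le_add hL hR
  have hpairs : #pairs ≤ 2 * Fintype.card ι ^ 2 :=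
    (card_filter_le _ _).trans (by simp [Fintype.card_prod, sq, mul_comm])
  calc #{t ∈ T | ¬HasRemnant (lift t)}
      ≤ ∑ q ∈ pairs, #(bad q) := (card_le_card hcover).trans card_biUnion_le
    _ ≤ #pairs * (2 * (K * #(normBall (α := β) m) ^ (Fintype.card ι - 1))) :=
      sum_le_card_nsmul _ _ _ hbad
    _ ≤ 2 * Fintype.card ι ^ 2 * (2 * (K * #(normBall (α := β) m) ^ (Fintype.card ι - 1))) :=
      Nat.mul_le_mul_right _ hpairs
    _ = _ := by ring

theorem one_sub_le_card_filter_hasRemnant_div [Nontrivial ι] [Nonempty β] (m : ℕ) :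
    1 - 4 * Fintype.card ι ^ 2 *
        ((m + 1) * (2 * Fintype.card β + 1 : ℝ) ^ (m / 2) / (2 * Fintype.card β - 1) ^ m) ≤
      (#{t ∈ piFinset fun _ : ι => normBall (α := β) m | HasRemnant (lift t)} : ℝ) /
        #(piFinset fun _ : ι => normBall (α := β) m) := by
  set T := piFinset fun _ : ι => normBall (α := β) m
  set N := #(normBall (α := β) m)
  have hβ : (1 : ℝ) ≤ Fintype.card β := by exact_mod_cast Fintype.card_pos
  have hT : #T = N * N ^ (Fintype.card ι - 1) := by
    rw [card_piFinset, prod_const, card_univ, ← pow_succ', Nat.sub_add_cancel Fintype.card_pos]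
  have hDN : (2 * Fintype.card β - 1 : ℝ) ^ m ≤ N := by
    have hcast : ((2 * Fintype.card β - 1 : ℕ) : ℝ) = 2 * Fintype.card β - 1 := by
      rw [Nat.cast_sub (by exact_mod_cast (by linarith : (1 : ℝ) ≤ 2 * Fintype.card β))]
      push_cast; ring
    rw [← hcast]
    exact_mod_cast pow_le_card_normBall (α := β) m
  have hD : (0 : ℝ) < (2 * Fintype.card β - 1) ^ m := pow_pos (by linarith) m
  rw [← mul_div_assoc, hT, Nat.cast_mul, Nat.cast_pow]
  refine one_sub_div_le_div (B := #{t ∈ T | ¬HasRemnant (lift t)}) ?_ ?_ (by positivity) hD hDN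
    (pow_pos (hD.trans_le hDN) _)
  · exact_mod_cast (card_filter_add_card_filter_not (s := T) fun t => HasRemnant (lift t)).trans hT
  · exact_mod_cast card_filter_not_hasRemnant_le (ι := ι) (β := β) m

end Counting

/-- For `n > 1` and any `ε > 0` there is `M > 0` such that for all
`m ≥ M`, among the endomorphisms `φ` of the free group of rank `n` (identified with
`n`-tuples of words) with `|φ(gᵢ)| ≤ m` for all `i`, the proportion with remnant
exceeds `1 - ε`. -/
theorem proportion_hasRemnant_gt {n : ℕ} (hn : 1 < n) :
    ∀ ε : ℝ, 0 < ε → ∃ M : ℕ, 0 < M ∧ ∀ m : ℕ, M ≤ m →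
      1 - ε <
        (Set.ncard {t : Fin n → FreeGroup (Fin n) |
            (∀ i, (t i).norm ≤ m) ∧ HasRemnant (FreeGroup.lift t)} : ℝ) /
          (Set.ncard {t : Fin n → FreeGroup (Fin n) | ∀ i, (t i).norm ≤ m} : ℝ) := by
  have : Nontrivial (Fin n) := Fin.nontrivial_iff_two_le.2 hn
  intro ε hε
  have hn' : (2 : ℝ) ≤ n := by exact_mod_cast hn
  have hlim := (tendsto_mul_pow_half_div_pow (a := 2 * (n : ℝ) + 1) (b := 2 * (n : ℝ) - 1)
    (by linarith) (by linarith) (by nlinarith)).const_mul (4 * (n : ℝ) ^ 2)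
  rw [mul_zero] at hlim
  obtain ⟨M, hM⟩ := eventually_atTop.1 (hlim.eventually (gt_mem_nhds hε))
  refine ⟨M + 1, M.succ_pos, fun m hm => ?_⟩
  have hball : {t : Fin n → FreeGroup (Fin n) | ∀ i, (t i).norm ≤ m} =
      ↑(piFinset fun _ : Fin n => normBall (α := Fin n) m) := by ext; simp
  have hrem :
      {t : Fin n → FreeGroup (Fin n) | (∀ i, (t i).norm ≤ m) ∧ HasRemnant (lift t)} =
        ↑{t ∈ piFinset fun _ : Fin n => normBall (α := Fin n) m | HasRemnant (lift t)} := by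
    ext; simp
  rw [hball, hrem, Set.ncard_coe_finset, Set.ncard_coe_finset]
  refine lt_of_lt_of_le ?_ (one_sub_le_card_filter_hasRemnant_div m)
  simpa using hM m (by omega)
end

section
/- Let G be a finitely generated free group with basis g₁, …, g_n and let H be a finitely generated free group of rank greater than 1. For any natural number l ≥ 1, the set of homomorphisms φ : G → H with remnant length l (i.e., with remnant and |Rem_φ(g_i)| ≥ l for every i) is generic: identifying each homomorphism with the n-tuple (φ(g₁), …, φ(g_n)) ∈ Hⁿ, the asymptotic density of this set equals 1. -/
/-! Basic definitions: cancellation in products of reduced words, remnant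
of a homomorphism of free groups, and assorted constructions. -/

open FreeGroup

/-- A set `S` of tuples `ι → H`, where `H` is the free group on `Fin k`, is generic if
its asymptotic density is `1`:  the proportion of tuples all of whose entries have reduced
word length at most `p` that lie in `S` tends to `1` as `p → ∞`. -/
def IsGeneric {k : ℕ} {ι : Type*} [Fintype ι] (S : Set (ι → FreeGroup (Fin k))) : Prop :=
  Filter.Tendsto
    (fun p : ℕ => (Set.ncard {t | t ∈ S ∧ ∀ i, (t i).norm ≤ p} : ℝ) /
      (Set.ncard {x : FreeGroup (Fin k) | FreeGroup.norm x ≤ p} : ℝ) ^ (Fintype.card ι))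
    Filter.atTop (nhds 1)

/-! Let `ρ = 2k - 1`. The ball of radius `p` in the free group of rank `k ≥ 2` has between
`ρ ^ p` and `3 ρ ^ p` elements. If `m` letters cancel in `x * y`, the first `m` letters of `y`
are determined by `x`; if `m` letters cancel in `x * x`, then `x = u c u⁻¹` with `|u| = m`.
Hence, among the tuples with entries in the ball of radius `p`, only a proportion
`O(ρ ^ (-p / 8))` has an entry of length at most `p / 2`, an entry `x` with more than `p / 8`
letters cancelling in `x * x`, or two distinct entries `x, y` with more than `p / 8` letters
cancelling in some `x^±1 * y^±1`. Every other tuple has remnant, with remnant length at least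
`p / 2 - 2 (p / 8) ≥ p / 4`, which is at least `l` once `p ≥ 8 l`. -/

open Finset Filter Topology

namespace FreeGroup

variable {α : Type*} [DecidableEq α]

theorem IsReduced.take_eq_invRev_drop {L M : List (α × Bool)} (hL : IsReduced L)
    (hM : IsReduced M) {m : ℕ}
    (h : (reduce (L ++ M)).length + 2 * m ≤ L.length + M.length) :
    M.take m = invRev (L.drop (L.length - m)) := by
  induction m generalizing L M with
  | zero => simp [invRev]
  | succ m ih =>
    by_cases hLM : IsReduced (L ++ M)
    · rw [hLM.reduce_eq, List.length_append] at h
      omega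
    obtain ⟨L₀, x, rfl⟩ : ∃ L₀ x, L = L₀ ++ [x] := by
      rcases List.eq_nil_or_concat' L with rfl | h
      · exact absurd hM (by simpa using hLM)
      · exact h
    obtain ⟨y, M₀, rfl⟩ : ∃ y M₀, M = y :: M₀ := by
      rcases M with _ | ⟨y, M₀⟩
      · exact absurd hL (by simpa using hLM)
      · exact ⟨y, M₀, rfl⟩
    have hxy : y = (x.1, !x.2) := by
      by_contra hne
      refine hLM (List.isChain_append.2 ⟨hL, hM, ?_⟩)
      simp only [List.getLast?_concat, List.head?_cons, Option.mem_def, Option.some.injEq]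
      rintro _ rfl _ rfl h1
      by_contra h2
      exact hne (Prod.ext h1.symm (Bool.eq_not_iff.2 (Ne.symm h2)))
    subst hxy
    have hred : reduce (L₀ ++ [x] ++ (x.1, !x.2) :: M₀) = reduce (L₀ ++ M₀) :=
      reduce.Step.eq (by simpa using Red.Step.not (L₁ := L₀) (L₂ := M₀) (x := x.1) (b := x.2))
    have := ih (L := L₀) (M := M₀) (hL.infix ⟨[], [x], by simp⟩)
      (hM.infix ⟨[(x.1, !x.2)], [], by simp⟩)
      (by simp only [hred, List.length_append, List.length_cons, List.length_nil] at h; omega)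
    rw [List.length_append, List.length_singleton, Nat.add_sub_add_right,
      List.drop_append_of_le_length (Nat.sub_le _ _), invRev_append, ← this]
    simp [invRev]

variable (α) [Fintype α]

def reducedWords : ℕ → Finset (List (α × Bool))
  | 0 => {[]}
  | m + 1 => (reducedWords m).biUnion fun L =>
      ({x | ∀ y ∈ L.head?, x.1 = y.1 → x.2 = y.2} : Finset (α × Bool)).image (· :: L)

def ball (p : ℕ) : Finset (FreeGroup α) :=
  ((range (p + 1)).biUnion (reducedWords α)).image mk

variable {α}

theorem mem_reducedWords {m : ℕ} {L : List (α × Bool)} :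
    L ∈ reducedWords α m ↔ IsReduced L ∧ L.length = m := by
  induction m generalizing L with
  | zero =>
    simp only [reducedWords, mem_singleton]
    exact ⟨by rintro rfl; exact ⟨.nil, rfl⟩, fun h => List.eq_nil_of_length_eq_zero h.2⟩
  | succ m ih =>
    rcases L with _ | ⟨x, L⟩
    · simp [reducedWords]
    simp only [reducedWords, mem_biUnion, mem_image, mem_filter, mem_univ, true_and,
      List.cons.injEq, ih, IsReduced, List.isChain_cons, List.length_cons]
    constructor
    · rintro ⟨_, ⟨hL, rfl⟩, _, hx, rfl, rfl⟩
      exact ⟨⟨hx, hL⟩, rfl⟩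
    · rintro ⟨⟨hx, hL⟩, hm⟩
      exact ⟨L, ⟨hL, by omega⟩, x, hx, rfl, rfl⟩

theorem card_reducedWords_succ (m : ℕ) :
    #(reducedWords α (m + 1)) = 2 * Fintype.card α * (2 * Fintype.card α - 1) ^ m := by
  have hsum : ∀ m, #(reducedWords α (m + 1)) = ∑ L ∈ reducedWords α m,
      #({x | ∀ y ∈ L.head?, x.1 = y.1 → x.2 = y.2} : Finset (α × Bool)) := by
    intro m
    rw [reducedWords, card_biUnion]
    · exact sum_congr rfl fun L _ =>
        card_image_of_injective _ fun x x' h => List.head_eq_of_cons_eq h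
    · intro L _ L' _ hLL'
      simp only [disjoint_left, mem_image]
      rintro _ ⟨x, -, rfl⟩ ⟨x', -, h⟩
      exact hLL' (List.tail_eq_of_cons_eq h).symm
  induction m with
  | zero => rw [hsum]; simp [reducedWords, mul_comm]
  | succ m ih =>
    rw [hsum, pow_succ, ← mul_assoc, ← ih, ← smul_eq_mul, ← sum_const]
    refine sum_congr rfl fun L hL => ?_
    obtain ⟨⟨c, d⟩, L, rfl⟩ := List.exists_cons_of_length_eq_add_one (mem_reducedWords.1 hL).2
    rw [show ({x | ∀ z ∈ ((c, d) :: L).head?, x.1 = z.1 → x.2 = z.2} : Finset (α × Bool)) =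
        univ.erase (c, !d) by ext ⟨a, b⟩; cases b <;> cases d <;> simp,
      card_erase_of_mem (mem_univ _)]
    simp [mul_comm]

theorem mem_ball {p : ℕ} {x : FreeGroup α} : x ∈ ball α p ↔ x.norm ≤ p := by
  constructor
  · simp only [ball, mem_image, mem_biUnion, mem_range, mem_reducedWords]
    rintro ⟨L, ⟨m, hm, -, rfl⟩, rfl⟩
    exact norm_mk_le.trans (by omega)
  · intro hx
    simp only [ball, mem_image, mem_biUnion, mem_range, mem_reducedWords]
    exact ⟨x.toWord, ⟨_, Nat.lt_succ_of_le hx, isReduced_toWord, rfl⟩, mk_toWord⟩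

theorem card_ball (p : ℕ) : #(ball α p) = ∑ m ∈ range (p + 1), #(reducedWords α m) := by
  rw [ball, card_image_of_injOn, card_biUnion]
  · intro m _ m' _ hmm'
    refine disjoint_left.2 fun L h h' => hmm' ?_
    rw [mem_reducedWords] at h h'
    rw [← h.2, h'.2]
  · intro L hL L' hL' h
    simp only [coe_biUnion, coe_range, Set.mem_iUnion, mem_coe, mem_reducedWords] at hL hL'
    obtain ⟨_, _, hL, -⟩ := hL
    obtain ⟨_, _, hL', -⟩ := hL'
    rw [← hL.reduce_eq, ← hL'.reduce_eq]
    exact reduce.sound h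

theorem pow_le_card_ball (p : ℕ) : (2 * Fintype.card α - 1) ^ p ≤ #(ball α p) := by
  rw [card_ball]
  refine le_trans ?_ (single_le_sum (fun _ _ => Nat.zero_le _) (self_mem_range_succ p))
  rcases p with _ | m
  · simp [reducedWords]
  · rw [card_reducedWords_succ, pow_succ']
    exact Nat.mul_le_mul_right _ (Nat.sub_le _ _)

theorem card_ball_le (hα : 2 ≤ Fintype.card α) (p : ℕ) :
    #(ball α p) ≤ 3 * (2 * Fintype.card α - 1) ^ p := by
  induction p with
  | zero => simp [card_ball, reducedWords]
  | succ p ih =>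
    rw [card_ball, sum_range_succ, ← card_ball, card_reducedWords_succ, pow_succ]
    have : 3 + 2 * Fintype.card α ≤ 3 * (2 * Fintype.card α - 1) := by omega
    nlinarith

end FreeGroup

section Cancel

variable {α : Type*} [DecidableEq α] {a b : FreeGroup α} {m : ℕ}

theorem le_cancel_iff : m ≤ cancel a b ↔ (a * b).norm + 2 * m ≤ a.norm + b.norm := by
  have := norm_mul_le a b
  unfold cancel
  omega

theorem toWord_take_eq_invRev_of_le_cancel (h : m ≤ cancel a b) :
    b.toWord.take m = invRev (a.toWord.drop (a.norm - m)) :=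
  isReduced_toWord.take_eq_invRev_drop isReduced_toWord (by
    rw [← toWord_mul]
    exact le_cancel_iff.1 h)

theorem norm_mk_drop_mul_le_of_le_cancel (h : m ≤ cancel a b) :
    (mk (a.toWord.drop (a.norm - m)) * b).norm ≤ b.norm - m := by
  have hb : b = (mk (a.toWord.drop (a.norm - m)))⁻¹ * mk (b.toWord.drop m) := by
    rw [inv_mk, ← toWord_take_eq_invRev_of_le_cancel h, mul_mk, List.take_append_drop, mk_toWord]
  conv_lhs => rw [hb, mul_inv_cancel_left]
  exact norm_mk_le.trans_eq (List.length_drop ..)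

theorem exists_eq_mul_mul_inv_of_le_cancel_self (h : m ≤ cancel a a) (hm : 2 * m ≤ a.norm) :
    ∃ u c : FreeGroup α, a = u * c * u⁻¹ ∧ u.norm ≤ m ∧ c.norm ≤ a.norm - 2 * m := by
  have hsplit : a.toWord = a.toWord.take m ++ (a.toWord.drop m).take (a.norm - 2 * m) ++
      a.toWord.drop (a.norm - m) := by
    conv_lhs => rw [← List.take_append_drop m a.toWord,
      ← List.take_append_drop (a.norm - 2 * m) (a.toWord.drop m)]
    rw [List.drop_drop, show m + (a.norm - 2 * m) = a.norm - m by omega, List.append_assoc]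
  have hsuffix : a.toWord.drop (a.norm - m) = invRev (a.toWord.take m) := by
    rw [toWord_take_eq_invRev_of_le_cancel h, invRev_invRev]
  refine ⟨mk (a.toWord.take m), mk ((a.toWord.drop m).take (a.norm - 2 * m)), ?_, ?_, ?_⟩
  · rw [inv_mk, ← hsuffix, mul_mk, mul_mk, ← hsplit, mk_toWord]
  · exact norm_mk_le.trans (List.length_take_le _ _)
  · exact norm_mk_le.trans (List.length_take_le _ _)

end Cancel

theorem norm_bpow {α : Type*} [DecidableEq α] (w : FreeGroup α) (e : Bool) :
    (bpow w e).norm = w.norm := by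
  cases e <;> simp [bpow]

theorem bpow_injective {α : Type*} (e : Bool) : Function.Injective (bpow (β := α) · e) := by
  cases e <;> simp [bpow, Function.Injective]

theorem card_filter_piFinset_mul_le {ι κ : Type*} [Fintype ι] [DecidableEq ι] [DecidableEq κ]
    (s : Finset κ) (i : ι) (P : (ι → κ) → Prop) [DecidablePred P] {M C : ℕ}
    (hfiber : ∀ f ∈ Fintype.piFinset fun _ => s,
      #{x ∈ s | P (Function.update f i x)} * M ≤ C * #s) :
    #{f ∈ Fintype.piFinset fun _ => s | P f} * M ≤ C * #s ^ Fintype.card ι := by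
  rcases s.eq_empty_or_nonempty with rfl | ⟨x₀, hx₀⟩
  · have : (Fintype.piFinset fun _ : ι => (∅ : Finset κ)) = ∅ :=
      Fintype.piFinset_eq_empty.2 ⟨i, rfl⟩
    simp [this]
  set T := Fintype.piFinset fun _ : ι => s
  set G := {f ∈ T | f i = x₀}
  -- `f` is recovered from `g = update f i x₀ ∈ G` and from `f i`.
  calc #{f ∈ T | P f} * M
      ≤ #(G.biUnion fun g => {x ∈ s | P (Function.update g i x)}.image
          (Function.update g i)) * M := by
        refine Nat.mul_le_mul_right _ (card_le_card fun f hf => ?_)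
        obtain ⟨hfT, hPf⟩ := mem_filter.1 hf
        have hfs : ∀ j, f j ∈ s := Fintype.mem_piFinset.1 hfT
        simp only [G, mem_biUnion, mem_image, mem_filter]
        refine ⟨Function.update f i x₀, ⟨Fintype.mem_piFinset.2 fun j => ?_, by simp⟩, f i,
          ⟨hfs i, by simpa using hPf⟩, by simp⟩
        rcases eq_or_ne j i with rfl | hj
        · simpa using hx₀
        · simpa [hj] using hfs j
    _ ≤ ∑ g ∈ G, #{x ∈ s | P (Function.update g i x)} * M := by
        rw [← sum_mul]
        exact Nat.mul_le_mul_right _ (card_biUnion_le.trans (sum_le_sum fun _ _ => card_image_le))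
    _ ≤ ∑ _g ∈ G, C * #s := sum_le_sum fun g hg => hfiber g (mem_filter.1 hg).1
    _ = C * #s ^ Fintype.card ι := by
        rw [sum_const, Fintype.card_filter_piFinset_const_eq_of_mem _ _ hx₀, smul_eq_mul,
          mul_left_comm, ← pow_succ, Nat.sub_add_cancel (Fintype.card_pos_iff.2 ⟨i⟩)]

section Remnant

def HasRemnantLength {α β : Type*} [Fintype α] [DecidableEq α] [DecidableEq β]
    (η : FreeGroup α →* FreeGroup β) (l : ℕ) : Prop :=
  HasRemnant η ∧ ∀ i, l ≤ remnantLength η i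

variable {α β : Type*} [Fintype α] [DecidableEq α] [DecidableEq β] {t : α → FreeGroup β} {c : ℕ}

theorem maxLeftCancel_lift_le {i : α}
    (h : ∀ j e, (j, e) ≠ (i, false) → cancel (bpow (t j) e) (t i) ≤ c) :
    maxLeftCancel (FreeGroup.lift t) i ≤ c :=
  Finset.sup_le fun je hje => by simpa using h je.1 je.2 (mem_filter.1 hje).2

theorem maxRightCancel_lift_le {i : α}
    (h : ∀ j e, (j, e) ≠ (i, false) → cancel (t i) (bpow (t j) e) ≤ c) :
    maxRightCancel (FreeGroup.lift t) i ≤ c :=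
  Finset.sup_le fun je hje => by simpa using h je.1 je.2 (mem_filter.1 hje).2

theorem hasRemnantLength_lift {l : ℕ} (hl : 1 ≤ l)
    (hlong : ∀ i, l + 2 * c ≤ (t i).norm) (hself : ∀ i, cancel (t i) (t i) ≤ c)
    (hpair : ∀ i j e e', i ≠ j → cancel (bpow (t i) e) (bpow (t j) e') ≤ c) :
    HasRemnantLength (FreeGroup.lift t) l := by
  have hbound : ∀ i, maxLeftCancel (FreeGroup.lift t) i ≤ c ∧
      maxRightCancel (FreeGroup.lift t) i ≤ c := by
    intro i
    constructor
    · refine maxLeftCancel_lift_le fun j e hje => ?_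
      rcases eq_or_ne j i with rfl | hji
      · obtain rfl : e = true := by simpa using hje
        exact hself j
      · simpa [bpow] using hpair j i e true hji
    · refine maxRightCancel_lift_le fun j e hje => ?_
      rcases eq_or_ne j i with rfl | hji
      · obtain rfl : e = true := by simpa using hje
        exact hself j
      · simpa [bpow] using hpair i j true e hji.symm
  refine ⟨fun i => ?_, fun i => ?_⟩ <;>
  · have := hlong i
    have := hbound i
    simp only [remnantLength, FreeGroup.lift_apply_of] at *
    omega

end Remnant

section Counting

variable {ι α : Type*} [Fintype ι] [DecidableEq ι] [DecidableEq α] [Fintype α]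

theorem card_filter_le_cancel_bpow_le (x : FreeGroup α) (e : Bool) (m p : ℕ) :
    #{y ∈ ball α p | m ≤ cancel x (bpow y e)} ≤ #(ball α (p - m)) := by
  refine card_le_card_of_injOn (fun y => mk (x.toWord.drop (x.norm - m)) * bpow y e) ?_ ?_
  · intro y hy
    obtain ⟨hyp, hym⟩ : y.norm ≤ p ∧ m ≤ cancel x (bpow y e) := by
      simpa only [mem_coe, mem_filter, mem_ball] using hy
    have := norm_mk_drop_mul_le_of_le_cancel hym
    rw [norm_bpow] at this
    rw [mem_coe, mem_ball]
    exact this.trans (by omega)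
  · intro y _ y' _ h
    exact bpow_injective e (mul_left_cancel h)

theorem card_filter_le_cancel_self_le (m p : ℕ) :
    #{x ∈ ball α p | 2 * m ≤ x.norm ∧ m ≤ cancel x x} ≤
      #(ball α m) * #(ball α (p - 2 * m)) := by
  have key : ∀ x ∈ ({x ∈ ball α p | 2 * m ≤ x.norm ∧ m ≤ cancel x x} : Finset _),
      ∃ uc : FreeGroup α × FreeGroup α, x = uc.1 * uc.2 * uc.1⁻¹ ∧ uc.1.norm ≤ m ∧
        uc.2.norm ≤ p - 2 * m := by
    intro x hx
    obtain ⟨hxp, hxm, hcancel⟩ : x.norm ≤ p ∧ 2 * m ≤ x.norm ∧ m ≤ cancel x x := by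
      simpa only [mem_filter, mem_ball, and_assoc] using hx
    obtain ⟨u, c, hx', hu, hc⟩ := exists_eq_mul_mul_inv_of_le_cancel_self hcancel hxm
    exact ⟨(u, c), hx', hu, le_trans hc (by omega)⟩
  choose! f hf using key
  rw [← card_product]
  refine card_le_card_of_injOn f (fun x hx => ?_) (fun x hx x' hx' h => ?_)
  · simp only [mem_coe, mem_product, mem_ball]
    exact (hf x hx).2
  · rw [(hf x hx).1, (hf x' hx').1, h]

theorem card_ball_mul_pow_le (hα : 2 ≤ Fintype.card α) {q r p : ℕ} (h : q + r ≤ p) :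
    #(ball α q) * (2 * Fintype.card α - 1) ^ r ≤ 3 * #(ball α p) :=
  calc #(ball α q) * (2 * Fintype.card α - 1) ^ r
      ≤ 3 * (2 * Fintype.card α - 1) ^ q * (2 * Fintype.card α - 1) ^ r :=
        Nat.mul_le_mul_right _ (card_ball_le hα q)
    _ ≤ 3 * (2 * Fintype.card α - 1) ^ p := by
        rw [mul_assoc, ← pow_add]
        exact Nat.mul_le_mul_left _ (Nat.pow_le_pow_right (by omega) h)
    _ ≤ 3 * #(ball α p) := Nat.mul_le_mul_left _ (pow_le_card_ball p)

theorem card_filter_norm_le_or_lt_cancel_self_mul_pow_le (hα : 2 ≤ Fintype.card α) {p : ℕ}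
    (hp : 8 ≤ p) :
    #{x ∈ ball α p | x.norm ≤ p / 2 ∨ p / 8 < cancel x x} * (2 * Fintype.card α - 1) ^ (p / 8 + 1)
      ≤ 12 * #(ball α p) := by
  set c := p / 8 + 1
  have hsub : ({x ∈ ball α p | x.norm ≤ p / 2 ∨ p / 8 < cancel x x} : Finset _) ⊆
      ball α (p / 2) ∪ {x ∈ ball α p | 2 * c ≤ x.norm ∧ c ≤ cancel x x} := by
    intro x hx
    simp only [mem_filter, mem_union, mem_ball] at hx ⊢
    omega
  have hdiag : #(ball α c) * #(ball α (p - 2 * c)) * (2 * Fintype.card α - 1) ^ c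
      ≤ 9 * #(ball α p) :=
    calc #(ball α c) * #(ball α (p - 2 * c)) * (2 * Fintype.card α - 1) ^ c
        ≤ 3 * (2 * Fintype.card α - 1) ^ c * (3 * (2 * Fintype.card α - 1) ^ (p - 2 * c)) *
            (2 * Fintype.card α - 1) ^ c := by
          gcongr <;> exact card_ball_le hα _
      _ = 9 * (2 * Fintype.card α - 1) ^ (c + (p - 2 * c) + c) := by ring
      _ = 9 * (2 * Fintype.card α - 1) ^ p := by congr 2; omega
      _ ≤ 9 * #(ball α p) := Nat.mul_le_mul_left _ (pow_le_card_ball p)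
  calc _ ≤ (#(ball α (p / 2)) + #(ball α c) * #(ball α (p - 2 * c))) *
        (2 * Fintype.card α - 1) ^ c :=
      Nat.mul_le_mul_right _ ((card_le_card hsub).trans
        ((card_union_le _ _).trans (Nat.add_le_add_left (card_filter_le_cancel_self_le c p) _)))
    _ ≤ 3 * #(ball α p) + 9 * #(ball α p) := by
      rw [add_mul]
      exact Nat.add_le_add (card_ball_mul_pow_le hα (by omega)) hdiag
    _ = 12 * #(ball α p) := by ring

theorem card_filter_lt_cancel_bpow_mul_pow_le (hα : 2 ≤ Fintype.card α) (x : FreeGroup α)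
    (e : Bool) {c p : ℕ} (hc : c + 1 ≤ p) :
    #{y ∈ ball α p | c < cancel x (bpow y e)} * (2 * Fintype.card α - 1) ^ (c + 1)
      ≤ 3 * #(ball α p) :=
  (Nat.mul_le_mul_right _ (card_filter_le_cancel_bpow_le x e (c + 1) p)).trans
    (card_ball_mul_pow_le hα (by omega))

theorem card_filter_piFinset_norm_le_or_lt_cancel_self_mul_pow_le (hα : 2 ≤ Fintype.card α)
    {p : ℕ} (hp : 8 ≤ p) (i : ι) :
    #{t ∈ Fintype.piFinset (fun _ : ι => ball α p) |
        (t i).norm ≤ p / 2 ∨ p / 8 < cancel (t i) (t i)} * (2 * Fintype.card α - 1) ^ (p / 8 + 1)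
      ≤ 12 * #(ball α p) ^ Fintype.card ι :=
  card_filter_piFinset_mul_le _ i _ fun f _ => by
    simpa using card_filter_norm_le_or_lt_cancel_self_mul_pow_le hα hp

theorem card_filter_piFinset_lt_cancel_bpow_mul_pow_le (hα : 2 ≤ Fintype.card α) {c p : ℕ}
    (hc : c + 1 ≤ p) (a b : ι) (e e' : Bool) :
    #{t ∈ Fintype.piFinset (fun _ : ι => ball α p) |
        a ≠ b ∧ c < cancel (bpow (t a) e) (bpow (t b) e')} * (2 * Fintype.card α - 1) ^ (c + 1)
      ≤ 3 * #(ball α p) ^ Fintype.card ι := by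
  refine card_filter_piFinset_mul_le _ b _ fun f _ => ?_
  rcases eq_or_ne a b with rfl | hab
  · simp
  · simpa [hab] using card_filter_lt_cancel_bpow_mul_pow_le hα (bpow (f a) e) e' hc

open Classical in
theorem card_filter_not_hasRemnantLength_mul_pow_le (hα : 2 ≤ Fintype.card α) {l p : ℕ}
    (hl : 1 ≤ l) (hp : 8 * l ≤ p) :
    #{t ∈ Fintype.piFinset (fun _ : ι => ball α p) | ¬HasRemnantLength (FreeGroup.lift t) l} *
      (2 * Fintype.card α - 1) ^ (p / 8 + 1) ≤
    12 * (Fintype.card ι + Fintype.card ι ^ 2) * #(ball α p) ^ Fintype.card ι := by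
  set T := Fintype.piFinset fun _ : ι => ball α p
  have hsub : {t ∈ T | ¬HasRemnantLength (FreeGroup.lift t) l} ⊆
      (univ.biUnion fun i => {t ∈ T | (t i).norm ≤ p / 2 ∨ p / 8 < cancel (t i) (t i)}) ∪
        univ.biUnion fun q : ι × ι × Bool × Bool => {t ∈ T |
          q.1 ≠ q.2.1 ∧ p / 8 < cancel (bpow (t q.1) q.2.2.1) (bpow (t q.2.1) q.2.2.2)} := by
    intro t ht
    obtain ⟨htT, hbad⟩ := mem_filter.1 ht
    by_contra hgood
    simp only [mem_union, mem_biUnion, mem_univ, true_and, mem_filter, htT, not_or, not_exists,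
      not_and, not_le, not_lt] at hgood
    refine hbad (hasRemnantLength_lift hl (fun i => ?_) (fun i => (hgood.1 i).2)
      fun i j e e' hij => hgood.2 (i, j, e, e') hij)
    have := (hgood.1 i).1
    omega
  refine (Nat.mul_le_mul_right _ ((card_le_card hsub).trans ((card_union_le _ _).trans
    (Nat.add_le_add card_biUnion_le card_biUnion_le)))).trans ?_
  rw [add_mul, sum_mul, sum_mul]
  refine (Nat.add_le_add
    (sum_le_sum fun i _ =>
      card_filter_piFinset_norm_le_or_lt_cancel_self_mul_pow_le hα (by omega) i)
    (sum_le_sum fun _ _ => card_filter_piFinset_lt_cancel_bpow_mul_pow_le hα (by omega) _ _ _ _)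
    ).trans_eq ?_
  simp only [sum_const, card_univ, Fintype.card_prod, Fintype.card_bool, smul_eq_mul]
  ring

end Counting

theorem tendsto_div_nhds_zero_of_mul_pow_le {a b : ℕ → ℕ} {C r : ℕ} (hr : 1 < r) {g : ℕ → ℕ}
    (hg : Tendsto g atTop atTop) (h : ∀ᶠ p in atTop, a p * r ^ g p ≤ C * b p) :
    Tendsto (fun p => (a p : ℝ) / b p) atTop (𝓝 0) := by
  have hr' : (1 : ℝ) < r := by exact_mod_cast hr
  have hbound : Tendsto (fun p => (C : ℝ) * (r : ℝ)⁻¹ ^ g p) atTop (𝓝 0) := by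
    simpa using ((tendsto_pow_atTop_nhds_zero_of_lt_one (by positivity)
      (inv_lt_one_of_one_lt₀ hr')).comp hg).const_mul (C : ℝ)
  refine squeeze_zero' (Eventually.of_forall fun p => by positivity) ?_ hbound
  filter_upwards [h] with p hp
  rcases (b p).eq_zero_or_pos with hb | hb
  · simp [hb]; positivity
  rw [inv_pow, ← div_eq_mul_inv, div_le_div_iff₀ (by exact_mod_cast hb) (by positivity)]
  exact_mod_cast hp

theorem isGeneric_of_tendsto_card_filter_not {k : ℕ} {ι : Type*} [Fintype ι] [DecidableEq ι]
    {P : (ι → FreeGroup (Fin k)) → Prop} [DecidablePred P]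
    (h : Tendsto (fun p => (#{t ∈ Fintype.piFinset (fun _ : ι => ball (Fin k) p) | ¬P t} : ℝ) /
      (#(ball (Fin k) p) ^ Fintype.card ι : ℕ)) atTop (𝓝 0)) :
    IsGeneric {t | P t} := by
  have hsplit : ∀ p, ({t | t ∈ {t | P t} ∧ ∀ i, (t i).norm ≤ p}.ncard : ℝ) /
      ({x : FreeGroup (Fin k) | x.norm ≤ p}.ncard : ℝ) ^ Fintype.card ι =
      1 - (#{t ∈ Fintype.piFinset (fun _ : ι => ball (Fin k) p) | ¬P t} : ℝ) /
        (#(ball (Fin k) p) ^ Fintype.card ι : ℕ) := by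
    intro p
    set T := Fintype.piFinset fun _ : ι => ball (Fin k) p
    have hgood : {t | t ∈ {t | P t} ∧ ∀ i, (t i).norm ≤ p}.ncard = #{t ∈ T | P t} := by
      rw [← Set.ncard_coe_finset]
      congr
      ext t
      simp [T, mem_ball, and_comm]
    have hball : {x : FreeGroup (Fin k) | x.norm ≤ p}.ncard = #(ball (Fin k) p) := by
      rw [← Set.ncard_coe_finset]
      congr
      ext
      simp [mem_ball]
    have hT : #T = #(ball (Fin k) p) ^ Fintype.card ι := by simp [T]
    have hpos : (0 : ℝ) < #T := by
      rw [hT]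
      exact_mod_cast pow_pos (card_pos.2 ⟨1, mem_ball.2 (by simp)⟩) _
    rw [hgood, hball, ← Nat.cast_pow, ← hT, eq_sub_iff_add_eq, ← add_div,
      div_eq_one_iff_eq hpos.ne']
    exact_mod_cast card_filter_add_card_filter_not _
  unfold IsGeneric
  simp_rw [hsplit]
  simpa using h.const_sub 1

/-- If `H` is a finitely generated free group of rank `k > 1`, then for
any `l ≥ 1` the set of homomorphisms `φ : G → H` with remnant length `l` is generic. -/
theorem remnant_length_generic {n k : ℕ} (hk : 1 < k) (l : ℕ) (hl : 1 ≤ l) :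
    IsGeneric {t : Fin n → FreeGroup (Fin k) |
      HasRemnant (FreeGroup.lift t) ∧
      ∀ i : Fin n, l ≤ remnantLength (FreeGroup.lift t) i} := by
  classical
  have hcard : 2 ≤ Fintype.card (Fin k) := by rw [Fintype.card_fin]; exact hk
  exact isGeneric_of_tendsto_card_filter_not (P := fun t => HasRemnantLength (FreeGroup.lift t) l)
    (tendsto_div_nhds_zero_of_mul_pow_le (by omega)
      ((tendsto_add_atTop_nat 1).comp (Nat.tendsto_div_const_atTop (n := 8) (by norm_num)))
      ((eventually_ge_atTop (8 * l)).mono fun p hp =>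
        card_filter_not_hasRemnantLength_mul_pow_le hcard hl hp))
end
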